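/- Let f : ℝ^d → ℝ be twice continuously differentiable, L-smooth, satisfy the PL inequality with constant μ > 0, and have min f = 0 (attained). Fix α > 0 and define E(x, v) := f(x) + (α/(α² + 2L))⟨∇f(x), v⟩ + (L/(α² + 2L))‖v‖². Then there exists a constant C₁ > 0 such that E(x, v) ≥ C₁(‖∇f(x)‖² + ‖v‖²) for all x, v ∈ ℝ^d, and there exists a constant C₂ > 0 such that for every solution (x_t, v_t)_{t ≥ 0} of the heavy ball ODE with friction parameter α, E(x_t, v_t) ≤ e^{−C₂ t} E(x_0, v_0) for all t ≥ 0. -/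

import Mathlib

/-!
Along the flow, `E(t) = f + a⟪∇f, v⟫ + b‖v‖²` with `a = α/(α²+2L)`, `b = L/(α²+2L)` has
derivative `a (⟪∇²f v, v⟫ - ‖∇f‖² - 2L‖v‖²)`: the weights are chosen so that the terms in
`⟪∇f, v⟫` cancel. Since `‖∇²f‖ ≤ L`, this is at most `-a (‖∇f‖² + L‖v‖²)`.
The descent lemma together with `f ≥ 0` gives `‖∇f‖² ≤ 2Lf`, which makes `E` coercive in
`(∇f, v)`, and the PL inequality `f ≤ ‖∇f‖²/(2μ)` bounds `E` above by a multiple of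
`‖∇f‖² + ‖v‖²`. Hence `E' ≤ -C₂ E`, and Grönwall's inequality gives the decay.
-/

open RealInnerProductSpace Set Real
open scoped Gradient

theorem le_exp_mul_of_hasDerivAt_le_mul {u u' : ℝ → ℝ} {K T : ℝ}
    (hu : ∀ t, HasDerivAt u (u' t) t) (hbound : ∀ t, u' t ≤ K * u t) (hT : 0 ≤ T) :
    u T ≤ exp (K * T) * u 0 := by
  have := le_gronwallBound_of_liminf_deriv_right_le (ε := 0) (b := T)
    (fun t _ => (hu t).continuousAt.continuousWithinAt)
    (fun t _ _ hr => (hu t).hasDerivWithinAt.liminf_right_slope_le hr) le_rfl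
    (fun t _ => by simpa using hbound t) T ⟨hT, le_rfl⟩
  rwa [sub_zero, gronwallBound_ε0, mul_comm] at this

theorem min_div_mul_le_add_of_le {A B P Q X Y Z : ℝ} (hA : 0 ≤ A) (hB : 0 ≤ B) (hP : 0 < P)
    (hQ : 0 < Q) (hX : 0 ≤ X) (hY : 0 ≤ Y) (hZ : Z ≤ P * X + Q * Y) :
    min (A / P) (B / Q) * Z ≤ A * X + B * Y := by
  have hAP : min (A / P) (B / Q) * P ≤ A := (le_div_iff₀ hP).1 (min_le_left _ _)
  have hBQ : min (A / P) (B / Q) * Q ≤ B := (le_div_iff₀ hQ).1 (min_le_right _ _)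
  calc min (A / P) (B / Q) * Z ≤ min (A / P) (B / Q) * (P * X + Q * Y) := by gcongr
    _ = min (A / P) (B / Q) * P * X + min (A / P) (B / Q) * Q * Y := by ring
    _ ≤ A * X + B * Y := by gcongr

section HeavyBall

variable {E : Type*} [NormedAddCommGroup E] [InnerProductSpace ℝ E]

theorem ContinuousLinearMap.real_inner_map_self_le {T : E →L[ℝ] E} {L : ℝ} (hT : ‖T‖ ≤ L)
    (w : E) : ⟪T w, w⟫ ≤ L * ‖w‖ ^ 2 :=
  calc ⟪T w, w⟫ ≤ ‖T w‖ * ‖w‖ := real_inner_le_norm _ _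
    _ ≤ ‖T‖ * ‖w‖ * ‖w‖ := by gcongr; exact T.le_opNorm w
    _ ≤ L * ‖w‖ ^ 2 := by rw [mul_assoc, ← sq]; gcongr

variable [CompleteSpace E] {f : E → ℝ} {L : ℝ}

theorem apply_add_le_of_lipschitz_gradient (hf : Differentiable ℝ f)
    (hLip : ∀ x y, ‖∇ f x - ∇ f y‖ ≤ L * ‖x - y‖) (x u : E) :
    f (x + u) ≤ f x + ⟪∇ f x, u⟫ + L / 2 * ‖u‖ ^ 2 := by
  have hφ : ∀ t : ℝ, HasDerivAt (fun t : ℝ => f (x + t • u)) ⟪∇ f (x + t • u), u⟫ t := fun t => by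
    have := (hf (x + t • u)).hasFDerivAt.comp_hasDerivAt t
      (((hasDerivAt_id t).smul_const u).const_add x)
    simpa [← inner_gradient_left, Function.comp_def] using this
  have hB : ∀ t : ℝ, HasDerivAt (fun t : ℝ => f x + t * ⟪∇ f x, u⟫ + L / 2 * t ^ 2 * ‖u‖ ^ 2)
      (⟪∇ f x, u⟫ + L * t * ‖u‖ ^ 2) t := fun t => by
    refine ((((hasDerivAt_id t).mul_const ⟪∇ f x, u⟫).const_add (f x)).add
      (((hasDerivAt_pow 2 t).const_mul (L / 2)).mul_const (‖u‖ ^ 2))).congr_deriv ?_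
    simp only [Nat.cast_ofNat]; ring
  have hbound : ∀ t ∈ Ico (0 : ℝ) 1,
      ⟪∇ f (x + t • u), u⟫ ≤ ⟪∇ f x, u⟫ + L * t * ‖u‖ ^ 2 := by
    intro t ht
    calc ⟪∇ f (x + t • u), u⟫ = ⟪∇ f x, u⟫ + ⟪∇ f (x + t • u) - ∇ f x, u⟫ := by
          rw [inner_sub_left]; ring
      _ ≤ ⟪∇ f x, u⟫ + ‖∇ f (x + t • u) - ∇ f x‖ * ‖u‖ := by
          gcongr; exact real_inner_le_norm _ _
      _ ≤ ⟪∇ f x, u⟫ + L * ‖t • u‖ * ‖u‖ := by gcongr; simpa using hLip (x + t • u) x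
      _ = ⟪∇ f x, u⟫ + L * t * ‖u‖ ^ 2 := by rw [norm_smul, Real.norm_of_nonneg ht.1]; ring
  simpa using image_le_of_deriv_right_le_deriv_boundary
    (fun t _ => (hφ t).continuousAt.continuousWithinAt) (fun t _ => (hφ t).hasDerivWithinAt)
    (by simp) (fun t _ => (hB t).continuousAt.continuousWithinAt)
    (fun t _ => (hB t).hasDerivWithinAt) hbound (right_mem_Icc.2 zero_le_one)

theorem norm_gradient_sq_le_of_lipschitz_gradient (hf : Differentiable ℝ f) (hL : 0 < L)
    (hLip : ∀ x y, ‖∇ f x - ∇ f y‖ ≤ L * ‖x - y‖) {m : ℝ} (hm : ∀ y, m ≤ f y) (x : E) :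
    ‖∇ f x‖ ^ 2 ≤ 2 * L * (f x - m) := by
  have h := apply_add_le_of_lipschitz_gradient hf hLip x (-L⁻¹ • ∇ f x)
  rw [inner_smul_right, real_inner_self_eq_norm_sq, norm_smul, norm_neg, norm_inv,
    Real.norm_of_nonneg hL.le] at h
  have hquad : L / 2 * (L⁻¹ * ‖∇ f x‖) ^ 2 = L⁻¹ * ‖∇ f x‖ ^ 2 / 2 := by field_simp
  have hdiv : L⁻¹ * ‖∇ f x‖ ^ 2 ≤ 2 * (f x - m) := by linarith [hm (x + -L⁻¹ • ∇ f x)]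
  rw [inv_mul_eq_div, div_le_iff₀' hL] at hdiv
  linarith

theorem ContDiff.differentiable_gradient (hf : ContDiff ℝ 2 f) : Differentiable ℝ (∇ f) :=
  (InnerProductSpace.toDual ℝ E).symm.differentiable.comp
    ((hf.fderiv_right (m := 1) (by norm_num)).differentiable one_ne_zero)

noncomputable def heavyBallLyapunov (f : E → ℝ) (α L : ℝ) (x v : E) : ℝ :=
  f x + α / (α ^ 2 + 2 * L) * ⟪∇ f x, v⟫ + L / (α ^ 2 + 2 * L) * ‖v‖ ^ 2

variable {α : ℝ}

theorem mul_norm_sq_add_norm_sq_le_heavyBallLyapunov (hL : 0 < L) {x : E}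
    (hx : ‖∇ f x‖ ^ 2 ≤ 2 * L * f x) (v : E) :
    min 1 (L / 2) / (α ^ 2 + 2 * L) * (‖∇ f x‖ ^ 2 + ‖v‖ ^ 2) ≤ heavyBallLyapunov f α L x v := by
  have hs : 0 < α ^ 2 + 2 * L := by positivity
  have hscaled : (α ^ 2 + 2 * L) * heavyBallLyapunov f α L x v =
      (α ^ 2 + 2 * L) * f x + α * ⟪∇ f x, v⟫ + L * ‖v‖ ^ 2 := by
    simp only [heavyBallLyapunov]; field_simp
  have hcross : -(|α| * (‖∇ f x‖ * ‖v‖)) ≤ α * ⟪∇ f x, v⟫ :=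
    calc -(|α| * (‖∇ f x‖ * ‖v‖)) ≤ -(|α| * |⟪∇ f x, v⟫|) := by
          gcongr; exact abs_real_inner_le_norm _ _
      _ = -|α * ⟪∇ f x, v⟫| := by rw [abs_mul]
      _ ≤ α * ⟪∇ f x, v⟫ := neg_abs_le _
  rw [div_mul_eq_mul_div, div_le_iff₀' hs, hscaled]
  refine le_of_mul_le_mul_left ?_ (by positivity : 0 < 2 * L)
  -- `(α² + 2L)‖∇f‖² - 2L|α|‖∇f‖‖v‖ + 2L²‖v‖² = (|α|‖∇f‖ - L‖v‖)² + 2L‖∇f‖² + L²‖v‖²`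
  nlinarith [mul_le_mul_of_nonneg_left hx hs.le, mul_le_mul_of_nonneg_left hcross hL.le,
    sq_nonneg (|α| * ‖∇ f x‖ - L * ‖v‖), sq_abs α,
    mul_le_mul_of_nonneg_right (min_le_left 1 (L / 2)) (by positivity : 0 ≤ 2 * L * ‖∇ f x‖ ^ 2),
    mul_le_mul_of_nonneg_right (min_le_right 1 (L / 2)) (by positivity : 0 ≤ 2 * L * ‖v‖ ^ 2)]

theorem heavyBallLyapunov_le (hα : 0 ≤ α) (hL : 0 ≤ L) {c : ℝ} {x : E}
    (hx : f x ≤ c * ‖∇ f x‖ ^ 2) (v : E) :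
    heavyBallLyapunov f α L x v ≤ (c + α / (α ^ 2 + 2 * L) / 2) * ‖∇ f x‖ ^ 2 +
      (α / (α ^ 2 + 2 * L) / 2 + L / (α ^ 2 + 2 * L)) * ‖v‖ ^ 2 := by
  have hcross : ⟪∇ f x, v⟫ ≤ (‖∇ f x‖ ^ 2 + ‖v‖ ^ 2) / 2 := by
    nlinarith [real_inner_le_norm (∇ f x) v, two_mul_le_add_sq ‖∇ f x‖ ‖v‖]
  have := mul_le_mul_of_nonneg_left hcross (by positivity : 0 ≤ α / (α ^ 2 + 2 * L))
  simp only [heavyBallLyapunov]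
  linarith

theorem hasDerivAt_heavyBallLyapunov (hf : Differentiable ℝ f) (hg : Differentiable ℝ (∇ f))
    (hs : α ^ 2 + 2 * L ≠ 0) {x v : ℝ → E} {t : ℝ} (hx : HasDerivAt x (v t) t)
    (hv : HasDerivAt v (-(α • v t) - ∇ f (x t)) t) :
    HasDerivAt (fun t => heavyBallLyapunov f α L (x t) (v t))
      (α / (α ^ 2 + 2 * L) *
        (⟪fderiv ℝ (∇ f) (x t) (v t), v t⟫ - ‖∇ f (x t)‖ ^ 2 - 2 * L * ‖v t‖ ^ 2)) t := by
  have hfx : HasDerivAt (fun t => f (x t)) ⟪∇ f (x t), v t⟫ t := by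
    simpa [← inner_gradient_left, Function.comp_def] using
      (hf (x t)).hasFDerivAt.comp_hasDerivAt t hx
  have hgx : HasDerivAt (fun t => ∇ f (x t)) (fderiv ℝ (∇ f) (x t) (v t)) t :=
    (hg (x t)).hasFDerivAt.comp_hasDerivAt t hx
  refine ((hfx.add ((hgx.inner ℝ hv).const_mul _)).add (hv.norm_sq.const_mul _)).congr_deriv ?_
  simp only [inner_sub_right, inner_neg_right, real_inner_smul_right, real_inner_self_eq_norm_sq,
    real_inner_comm (v t)]
  field_simp
  ring

end HeavyBall

/-- **Lyapunov function estimates for the heavy ball ODE.**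
Let `f : ℝ^d → ℝ` be `C²`, `L`-smooth, satisfy the PL inequality with constant `μ > 0`, and
have minimum `0` attained at `xstar`. Fix `α > 0` and define
`E(x,v) = f(x) + (α/(α²+2L))⟪∇f(x), v⟫ + (L/(α²+2L))‖v‖²`. Then there is `C₁ > 0` with
`E(x,v) ≥ C₁(‖∇f(x)‖² + ‖v‖²)` for all `x, v`, and there is `C₂ > 0` such that along every
solution of the heavy ball ODE with friction `α`, `E(x_t, v_t) ≤ e^{-C₂ t} E(x_0, v_0)`
for all `t ≥ 0`. -/
theorem heavy_ball_lyapunov_estimates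
    (d : ℕ) (f : EuclideanSpace ℝ (Fin d) → ℝ) (μ L : ℝ) (hμ : 0 < μ) (hL : 0 < L)
    (hC2 : ContDiff ℝ 2 f)
    (xstar : EuclideanSpace ℝ (Fin d)) (hstar : ∀ y, f xstar ≤ f y) (hzero : f xstar = 0)
    (hPL : ∀ x, 2 * μ * (f x - f xstar) ≤ ‖gradient f x‖ ^ 2)
    (hLip : ∀ x y, ‖gradient f x - gradient f y‖ ≤ L * ‖x - y‖)
    (α : ℝ) (hα : 0 < α) :
    (∃ C₁ : ℝ, 0 < C₁ ∧ ∀ x v : EuclideanSpace ℝ (Fin d),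
      C₁ * (‖gradient f x‖ ^ 2 + ‖v‖ ^ 2) ≤
        f x + α / (α ^ 2 + 2 * L) * ⟪gradient f x, v⟫ + L / (α ^ 2 + 2 * L) * ‖v‖ ^ 2) ∧
    (∃ C₂ : ℝ, 0 < C₂ ∧ ∀ x v : ℝ → EuclideanSpace ℝ (Fin d),
      (∀ t : ℝ, HasDerivAt x (v t) t) →
      (∀ t : ℝ, HasDerivAt v (-(α • v t) - gradient f (x t)) t) →
      ∀ t : ℝ, 0 ≤ t →
        f (x t) + α / (α ^ 2 + 2 * L) * ⟪gradient f (x t), v t⟫ +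
            L / (α ^ 2 + 2 * L) * ‖v t‖ ^ 2 ≤
          Real.exp (-C₂ * t) *
            (f (x 0) + α / (α ^ 2 + 2 * L) * ⟪gradient f (x 0), v 0⟫ +
              L / (α ^ 2 + 2 * L) * ‖v 0‖ ^ 2)) := by
  have hf : Differentiable ℝ f := hC2.differentiable (by norm_num)
  have hlow (x) : ‖∇ f x‖ ^ 2 ≤ 2 * L * f x := by
    simpa [hzero] using norm_gradient_sq_le_of_lipschitz_gradient hf hL hLip hstar x
  have hup (x) : f x ≤ (2 * μ)⁻¹ * ‖∇ f x‖ ^ 2 := by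
    rw [inv_mul_eq_div, le_div_iff₀' (by positivity)]
    simpa [hzero] using hPL x
  have hH (y w) : ⟪fderiv ℝ (∇ f) y w, w⟫ ≤ L * ‖w‖ ^ 2 :=
    ContinuousLinearMap.real_inner_map_self_le
      (norm_fderiv_le_of_lip' ℝ hL.le (Filter.Eventually.of_forall fun z => hLip z y)) w
  refine ⟨⟨_, by positivity, fun x v =>
    mul_norm_sq_add_norm_sq_le_heavyBallLyapunov hL (hlow x) v⟩, ?_⟩
  set a := α / (α ^ 2 + 2 * L) with ha_def
  have ha : 0 < a := by positivity
  refine ⟨min (a / ((2 * μ)⁻¹ + a / 2)) (a * L / (a / 2 + L / (α ^ 2 + 2 * L))), by positivity,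
    fun x v hx hv t ht => ?_⟩
  refine le_exp_mul_of_hasDerivAt_le_mul (u := fun t => heavyBallLyapunov f α L (x t) (v t))
    (fun t => hasDerivAt_heavyBallLyapunov hf hC2.differentiable_gradient (by positivity)
      (hx t) (hv t)) (fun t => ?_) ht
  have hE := min_div_mul_le_add_of_le (B := a * L) ha.le (by positivity) (by positivity)
    (by positivity) (sq_nonneg ‖∇ f (x t)‖) (sq_nonneg ‖v t‖)
    (heavyBallLyapunov_le hα.le hL.le (hup (x t)) (v t))
  rw [← ha_def] at hE
  linarith [mul_le_mul_of_nonneg_left (hH (x t) (v t)) ha.le]
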